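/- (Laplace transform of the noncentral chi-square density.) Let δ > 0, z > 0 and λ ≥ 0. Define the modified Bessel function of order ν by I_ν(x) = (x/2)^ν ∑_{n=0}^{∞} (x/2)^{2n} / (n! Γ(ν + n + 1)), and the noncentral chi-square density with δ degrees of freedom and noncentrality parameter z by f_{δ,z}(x) = (1/2) e^{−(x+z)/2} (x/z)^{δ/4 − 1/2} I_{δ/2 − 1}(√(x z)) for x > 0. Then ∫₀^{∞} e^{−λ x} f_{δ,z}(x) dx = (2λ + 1)^{−δ/2} exp( −λ z / (2λ + 1) ). In particular (λ = 0), f_{δ,z} is a probability density on (0,∞). -/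

import Mathlib

/-!
Expanding the Bessel series termwise exhibits `f_{δ,z}` as a Poisson mixture of central
chi-square densities: the gamma densities of shape `δ/2 + n` and rate `1/2`, with weights
`e^{-z/2} (z/2)^n / n!`. A gamma density of shape `a` and rate `r` has Laplace transform
`(r/(r+λ))^a`; integrating the nonnegative series termwise, the transform of the mixture is
`q^{δ/2}` times the generating function `exp(μ(q-1))` of the Poisson(μ) weights, with `μ = z/2`
and `q = 1/(2λ+1)`.
-/

open MeasureTheory

/-- Modified Bessel function of order `ν`:
`I_ν(x) = (x/2)^ν ∑_{n=0}^∞ (x/2)^{2n} / (n! Γ(ν + n + 1))`. -/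
noncomputable def besselI (ν x : ℝ) : ℝ :=
  (x / 2) ^ ν * ∑' n : ℕ, (x / 2) ^ (2 * n) / ((n.factorial : ℝ) * Real.Gamma (ν + n + 1))

/-- Noncentral chi-square density with `δ` degrees of freedom and noncentrality
parameter `z`: `f_{δ,z}(x) = (1/2) e^{−(x+z)/2} (x/z)^{δ/4 − 1/2} I_{δ/2−1}(√(xz))`. -/
noncomputable def ncChiSqPDF (δ z x : ℝ) : ℝ :=
  (1 / 2) * Real.exp (-(x + z) / 2) * (x / z) ^ (δ / 4 - 1 / 2) *
    besselI (δ / 2 - 1) (Real.sqrt (x * z))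

open Real ProbabilityTheory Set

lemma exp_neg_mul_mul_gammaPDFReal {a r s x : ℝ} (hx : 0 ≤ x) :
    exp (-s * x) * gammaPDFReal a r x
      = r ^ a / Gamma a * (x ^ (a - 1) * exp (-((r + s) * x))) := by
  rw [gammaPDFReal, if_pos hx, show -((r + s) * x) = -(r * x) + -s * x by ring, exp_add]
  ring

lemma integrableOn_exp_neg_mul_mul_gammaPDFReal {a r s : ℝ} (ha : 0 < a) (hrs : 0 < r + s) :
    IntegrableOn (fun x ↦ exp (-s * x) * gammaPDFReal a r x) (Ioi 0) := by
  have hpow : IntegrableOn (fun x : ℝ ↦ x ^ (a - 1) * exp (-((r + s) * x))) (Ioi 0) := by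
    simpa only [rpow_one, neg_mul] using
      integrableOn_rpow_mul_exp_neg_mul_rpow (p := 1) (by linarith : -1 < a - 1) one_pos hrs
  refine IntegrableOn.congr_fun (hpow.const_mul (r ^ a / Gamma a)) (fun x hx ↦ ?_)
    measurableSet_Ioi
  exact (exp_neg_mul_mul_gammaPDFReal (le_of_lt hx)).symm

theorem integral_exp_neg_mul_mul_gammaPDFReal {a r s : ℝ} (ha : 0 < a) (hr : 0 ≤ r)
    (hrs : 0 < r + s) :
    ∫ x in Ioi 0, exp (-s * x) * gammaPDFReal a r x = (r / (r + s)) ^ a := by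
  rw [setIntegral_congr_fun measurableSet_Ioi
      fun x hx ↦ exp_neg_mul_mul_gammaPDFReal (le_of_lt hx), integral_const_mul, integral_rpow_mul_exp_neg_mul_Ioi ha hrs, div_rpow hr hrs.le,
    div_rpow zero_le_one hrs.le, one_rpow]
  field_simp [(Gamma_pos_of_pos ha).ne', (rpow_pos_of_pos hrs a).ne']

lemma hasSum_exp_neg_mul_pow_div_factorial_mul_pow (μ q : ℝ) :
    HasSum (fun n : ℕ ↦ exp (-μ) * μ ^ n / n.factorial * q ^ n) (exp (μ * (q - 1))) := by
  rw [show μ * (q - 1) = -μ + μ * q by ring, exp_add, congrFun exp_eq_exp_ℝ (μ * q)]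
  have hterm : (fun n : ℕ ↦ exp (-μ) * μ ^ n / n.factorial * q ^ n)
      = fun n ↦ exp (-μ) * ((μ * q) ^ n / n.factorial) := by
    funext n
    rw [mul_pow]
    ring
  rw [hterm]
  exact (NormedSpace.expSeries_div_hasSum_exp (μ * q)).mul_left (exp (-μ))

theorem integral_exp_neg_mul_mul_tsum_poisson_gammaPDFReal {μ a r s : ℝ} (hμ : 0 ≤ μ)
    (ha : 0 < a) (hr : 0 < r) (hrs : 0 < r + s) :
    ∫ x in Ioi 0, exp (-s * x) *
        ∑' n : ℕ, exp (-μ) * μ ^ n / n.factorial * gammaPDFReal (a + n) r x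
      = (r / (r + s)) ^ a * exp (-(μ * s) / (r + s)) := by
  set q := r / (r + s)
  set w : ℕ → ℝ := fun n ↦ exp (-μ) * μ ^ n / n.factorial
  set F : ℕ → ℝ → ℝ := fun n x ↦ w n * (exp (-s * x) * gammaPDFReal (a + n) r x)
  have ha_add : ∀ n : ℕ, 0 < a + n := fun n ↦ by positivity
  have hF_int (n : ℕ) : IntegrableOn (F n) (Ioi 0) :=
    (integrableOn_exp_neg_mul_mul_gammaPDFReal (ha_add n) hrs).const_mul _
  have hF_integral (n : ℕ) : ∫ x in Ioi 0, F n x = q ^ a * (w n * q ^ n) := by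
    rw [integral_const_mul, integral_exp_neg_mul_mul_gammaPDFReal (ha_add n) hr.le hrs,
      rpow_add' (by positivity) (ha_add n).ne', rpow_natCast]
    ring
  have hF_norm (n : ℕ) : ∫ x in Ioi 0, ‖F n x‖ = ∫ x in Ioi 0, F n x :=
    integral_congr_ae (Filter.Eventually.of_forall fun x ↦
      Real.norm_of_nonneg (by have := gammaPDFReal_nonneg (ha_add n) hr x; positivity))
  have hsum : HasSum (fun n ↦ q ^ a * (w n * q ^ n)) (q ^ a * exp (μ * (q - 1))) :=
    (hasSum_exp_neg_mul_pow_div_factorial_mul_pow μ q).mul_left _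
  calc ∫ x in Ioi 0, exp (-s * x) * ∑' n : ℕ, w n * gammaPDFReal (a + n) r x
      = ∫ x in Ioi 0, ∑' n, F n x := by
        congr 1 with x
        rw [← tsum_mul_left]
        exact tsum_congr fun n ↦ by ring
    _ = ∑' n, ∫ x in Ioi 0, F n x :=
        (integral_tsum_of_summable_integral_norm hF_int
          (by simpa only [hF_norm, hF_integral] using hsum.summable)).symm
    _ = q ^ a * exp (-(μ * s) / (r + s)) := by
        rw [tsum_congr hF_integral, hsum.tsum_eq]
        congr 2
        rw [div_sub_one hrs.ne']
        ring

lemma rpow_half_div_mul_sqrt_mul_div_two {x z : ℝ} (hx : 0 ≤ x) (hz : 0 < z) (ν : ℝ) :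
    (x / z) ^ (ν / 2) * (√(x * z) / 2) ^ ν = (x / 2) ^ ν := by
  have hxz : 0 ≤ x * z := by positivity
  rw [div_rpow (sqrt_nonneg _) zero_le_two, sqrt_eq_rpow, ← rpow_mul hxz, one_div_mul_eq_div,
    mul_div_assoc', ← mul_rpow (by positivity) hxz,
    show x / z * (x * z) = x ^ (2 : ℝ) by rw [rpow_two]; field_simp, ← rpow_mul hx,
    mul_div_cancel₀ ν two_ne_zero, div_rpow hx zero_le_two]

lemma gammaPDFReal_add_natCast_half {a x : ℝ} (hx : 0 < x) (n : ℕ) :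
    gammaPDFReal (a + n) (1 / 2) x
      = exp (-(x / 2)) / 2 * (x / 2) ^ (a - 1) * (x / 2) ^ n / Gamma (a + n) := by
  have hpow : (1 / 2 : ℝ) ^ (a + n) * x ^ (a + n - 1) = (x / 2) ^ (a - 1) * (x / 2) ^ n / 2 := by
    rw [show a + n = (a + n - 1) + 1 by ring, rpow_add one_half_pos, rpow_one,
      add_sub_cancel_right, mul_right_comm, ← mul_rpow (by norm_num) hx.le,
      one_div_mul_eq_div, show a + n - 1 = (a - 1) + n by ring, rpow_add (by positivity),
      rpow_natCast]
    ring
  rw [gammaPDFReal, if_pos hx.le, div_mul_eq_mul_div, mul_right_comm, hpow,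
    show 1 / 2 * x = x / 2 by ring]
  ring

theorem ncChiSqPDF_eq_tsum {δ z x : ℝ} (hz : 0 < z) (hx : 0 < x) :
    ncChiSqPDF δ z x = ∑' n : ℕ,
      exp (-(z / 2)) * (z / 2) ^ n / n.factorial * gammaPDFReal (δ / 2 + n) (1 / 2) x := by
  have hxz : 0 ≤ x * z := by positivity
  have hterm (n : ℕ) : (√(x * z) / 2) ^ (2 * n) / (n.factorial * Gamma (δ / 2 - 1 + n + 1))
      = (x / 2) ^ n * (z / 2) ^ n / (n.factorial * Gamma (δ / 2 + n)) := by
    rw [pow_mul, div_pow, sq_sqrt hxz, ← mul_pow, show δ / 2 - 1 + n + 1 = δ / 2 + n by ring]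
    ring
  rw [ncChiSqPDF, besselI, show δ / 4 - 1 / 2 = (δ / 2 - 1) / 2 by ring, mul_assoc,
    ← mul_assoc ((x / z) ^ _), rpow_half_div_mul_sqrt_mul_div_two hx.le hz, tsum_congr hterm,
    ← tsum_mul_left, ← tsum_mul_left]
  refine tsum_congr fun n ↦ ?_
  rw [gammaPDFReal_add_natCast_half hx, show -(x + z) / 2 = -(z / 2) + -(x / 2) by ring, exp_add]
  ring

lemma ncChiSqPDF_nonneg {δ z x : ℝ} (hδ : 0 < δ) (hz : 0 < z) (hx : 0 < x) :
    0 ≤ ncChiSqPDF δ z x := by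
  rw [ncChiSqPDF_eq_tsum hz hx]
  exact tsum_nonneg fun n ↦
    mul_nonneg (by positivity) (gammaPDFReal_nonneg (by positivity) one_half_pos x)

theorem integral_exp_neg_mul_mul_ncChiSqPDF {δ z lam : ℝ} (hδ : 0 < δ) (hz : 0 < z)
    (hlam : 0 < 2 * lam + 1) :
    ∫ x in Ioi 0, exp (-lam * x) * ncChiSqPDF δ z x
      = (2 * lam + 1) ^ (-(δ / 2)) * exp (-lam * z / (2 * lam + 1)) := by
  have hne : 2 * lam + 1 ≠ 0 := hlam.ne'
  rw [setIntegral_congr_fun measurableSet_Ioi fun x hx ↦ by rw [ncChiSqPDF_eq_tsum hz hx],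
    integral_exp_neg_mul_mul_tsum_poisson_gammaPDFReal (by positivity) (by positivity)
      one_half_pos (by linarith),
    show (1 / 2 : ℝ) + lam = (2 * lam + 1) / 2 by ring,
    show (1 / 2 : ℝ) / ((2 * lam + 1) / 2) = (2 * lam + 1)⁻¹ by field_simp,
    inv_rpow hlam.le, ← rpow_neg hlam.le]
  congr 2
  field_simp

/-- Laplace transform of the noncentral chi-square density:
`∫₀^∞ e^{−λx} f_{δ,z}(x) dx = (2λ+1)^{−δ/2} exp(−λz/(2λ+1))`; in particular (`λ = 0`)
`f_{δ,z}` is a probability density on `(0,∞)`. -/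
theorem ncChiSq_laplace (δ z lam : ℝ) (hδ : 0 < δ) (hz : 0 < z) (hlam : 0 ≤ lam) :
    (∫ x in Set.Ioi (0 : ℝ), Real.exp (-lam * x) * ncChiSqPDF δ z x) =
      (2 * lam + 1) ^ (-(δ / 2)) * Real.exp (-lam * z / (2 * lam + 1)) ∧
    (∀ x : ℝ, 0 < x → 0 ≤ ncChiSqPDF δ z x) ∧
    (∫ x in Set.Ioi (0 : ℝ), ncChiSqPDF δ z x) = 1 := by
  refine ⟨integral_exp_neg_mul_mul_ncChiSqPDF hδ hz (by linarith),
    fun x hx ↦ ncChiSqPDF_nonneg hδ hz hx, ?_⟩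
  simpa using integral_exp_neg_mul_mul_ncChiSqPDF (lam := 0) hδ hz (by norm_num)
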